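/- Let z_0,...,z_m be pairwise distinct complex numbers and w_0,...,w_m nonzero complex numbers, and let λ ∈ ℂ be distinct from all z_j with ∑_{i=0}^m w_i/(λ−z_i) ≠ 0. Let W be the (m+1)×m bidiagonal matrix with W_{j,j} = −w_{j+1}, W_{j+1,j} = w_j and Z = diag(z_0,...,z_m). Then the row vector v = [r_0(λ),...,r_m(λ)], where r_j(λ) = (w_j/(λ−z_j))/(∑_i w_i/(λ−z_i)), is nonzero and satisfies v(ZW − λW) = 0, i.e., v is a left null vector of the pencil Z W − λ W. -/

import Mathlib

/-
Multiplying the `i`-th row of `Z W - λ W` by `(w_i / (λ - z_i)) / d`, with `d = ∑ w_i / (λ - z_i)`,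
cancels the factor `z_i - λ`, so the product is `-d⁻¹ • (w W)`. The weight vector `w` itself is a
left null vector of `W`: column `j` of `W` has the two entries `-w_{j+1}` and `w_j`, paired with
`w_j` and `w_{j+1}`.
-/

open Finset Matrix

/-- The `(m+1) × m` lower-bidiagonal barycentric weight matrix. -/
def baryW (m : ℕ) (w : Fin (m + 1) → ℂ) : Matrix (Fin (m + 1)) (Fin m) ℂ :=
  Matrix.of fun i j =>
    if i = j.castSucc then -w j.succ else if i = j.succ then w j.castSucc else 0

theorem Matrix.vecMul_diagonal_mul_sub_smul {R ι κ : Type*} [CommRing R] [Fintype ι]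
    [DecidableEq ι] (v z : ι → R) (lam : R) (A : Matrix ι κ R) :
    vecMul v (diagonal z * A - lam • A) = vecMul (fun i => v i * (z i - lam)) A := by
  rw [smul_eq_diagonal_mul, ← Matrix.sub_mul, diagonal_sub, ← vecMul_vecMul]
  congr 1
  funext i
  exact vecMul_diagonal _ _ i

theorem vecMul_baryW_self (m : ℕ) (w : Fin (m + 1) → ℂ) : vecMul w (baryW m w) = 0 := by
  funext j
  rw [vecMul, dotProduct, Fintype.sum_eq_add j.castSucc j.succ Fin.castSucc_lt_succ.ne]
  · simp only [baryW, of_apply, ↓reduceIte, mul_neg, Fin.castSucc_lt_succ.ne', Pi.zero_apply]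
    ring
  · rintro i ⟨h₁, h₂⟩
    simp [baryW, h₁, h₂]

theorem bary_left_null_vector_general (m : ℕ) (z w : Fin (m + 1) → ℂ)
    (hw : ∀ j, w j ≠ 0) (lam : ℂ)
    (hlam : ∀ i, lam ≠ z i) (hd : (∑ i, w i / (lam - z i)) ≠ 0) :
    (fun i => (w i / (lam - z i)) / (∑ i', w i' / (lam - z i'))) ≠ 0 ∧
      Matrix.vecMul (fun i => (w i / (lam - z i)) / (∑ i', w i' / (lam - z i')))
        (Matrix.diagonal z * baryW m w - lam • baryW m w) = 0 := by
  set d := ∑ i', w i' / (lam - z i')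
  have hsub : ∀ i, lam - z i ≠ 0 := fun i => sub_ne_zero.mpr (hlam i)
  refine ⟨fun h => div_ne_zero (div_ne_zero (hw 0) (hsub 0)) hd (congrFun h 0), ?_⟩
  have hscaled : (fun i => w i / (lam - z i) / d * (z i - lam)) = (-d⁻¹) • w := by
    funext i
    rw [Pi.smul_apply, smul_eq_mul, ← neg_sub lam (z i)]
    field_simp [hsub i]
  rw [vecMul_diagonal_mul_sub_smul, hscaled, smul_vecMul, vecMul_baryW_self, smul_zero]

/-- the row vector of barycentric basis function values at `λ`
is a nonzero left null vector of the shifted pencil `Z W - λ W`. -/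
theorem bary_left_null_vector (m : ℕ) (z w : Fin (m + 1) → ℂ)
    (hz : Function.Injective z) (hw : ∀ j, w j ≠ 0) (lam : ℂ)
    (hlam : ∀ i, lam ≠ z i) (hd : (∑ i, w i / (lam - z i)) ≠ 0) :
    (fun i => (w i / (lam - z i)) / (∑ i', w i' / (lam - z i'))) ≠ 0 ∧
      Matrix.vecMul (fun i => (w i / (lam - z i)) / (∑ i', w i' / (lam - z i')))
        (Matrix.diagonal z * baryW m w - lam • baryW m w) = 0 :=
  bary_left_null_vector_general m z w hw lam hlam hd
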